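/- arXiv:1211.3323 — 4 statements merged into one kernel-verified Lean document; each statement's English description precedes it below -/
import Mathlib

section
/- Let h ≥ t ≥ 1 be integers, n := h·t, let 0 ≤ s ≤ n be an integer, d := gcd(n,s) and m := n/d. Consider the Speh configuration points ux_a := ℓ(x_a) and uy_a := ℓ(y_a + 1) for a = 1,…,t. Then the following two statements are equivalent: (i) for every class ρ ∈ ℚ/ℤ, the number of indices a ∈ {1,…,t} with ρ(ux_a) = ρ equals the number of indices a with ρ(uy_a) = ρ; (ii) m divides t or m divides h. -/
/-!
With `θ = s/n mod ℤ`, of order `m`, the invariants are `ρ(ux_a) = b - a•θ` and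
`ρ(uy_a) = b - (a - h)•θ` for a fixed `b`. As `k ↦ k•θ` embeds `ℤ/m` into `ℚ/ℤ`, (i) says that
the residues mod `m` of `0, …, t-1` occur as often at `c` as at `c + h`. Residue `c` occurs
`⌊t/m⌋ + [c < t mod m]` times, so (i) says that the segment `{0, …, r-1}`, `r = t mod m`, of
`ℤ/m` is invariant under translation by `h`. If `0 < r`, the segment contains `0` and hence `h`;
unless `h = 0` in `ℤ/m`, it then also contains `r - h`, whose translate `r` lies outside it.
-/

open scoped BigOperators

/-- The weight ring `A⁺ = ℂ[ℚ]`, the group algebra of the additive group `ℚ`. -/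
abbrev Aplus : Type := AddMonoidAlgebra ℂ ℚ

/-- The basis element `q^x` of `A⁺`. -/
noncomputable def qpow (x : ℚ) : Aplus := AddMonoidAlgebra.single x 1

/-- `ℚ/ℤ`. -/
abbrev QmodZ : Type := ℚ ⧸ AddSubgroup.zmultiples (1 : ℚ)

/-- Reduction of a rational number modulo `ℤ`. -/
def ratMod (x : ℚ) : QmodZ := QuotientAddGroup.mk' _ x

/-- The invariant of a point of `ℚ²`: its second coordinate mod `ℤ`. -/
def invPt (v : ℚ × ℚ) : QmodZ := ratMod v.2

/-- The point `ℓ(x)` on the line of slope `slope` through the origin. -/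
def linePt (slope x : ℚ) : ℚ × ℚ := (x, slope * x)

/-- A lattice path: a starting point together with a list of steps;
`false` is an east step `(1,0)`, `true` a north-east step `(1,1)`. -/
structure LPath where
  start : ℚ × ℚ
  steps : List Bool

namespace LPath

/-- The displacement of a step. -/
def stepVec (b : Bool) : ℚ × ℚ := (1, if b then 1 else 0)

/-- The list of vertices of a path (including the first and last points). -/
def vertices (L : LPath) : List (ℚ × ℚ) :=
  L.steps.scanl (fun v b => v + stepVec b) L.start

/-- The endpoint of a path. -/
def endpt (L : LPath) : ℚ × ℚ :=
  L.steps.foldl (fun v b => v + stepVec b) L.start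

/-- The exponent of `q` in the weight of a path for degree `α`: a north-east
step starting at `(a,b)` contributes `-α·a`, an east step contributes `0`. -/
def expnt (α : ℕ) (L : LPath) : ℚ :=
  ((L.steps.zipIdx.map Prod.swap).map (fun p : ℕ × Bool =>
    if p.2 then -(α : ℚ) * (L.start.1 + (p.1 : ℚ)) else 0)).sum

/-- The weight of a path: the product of the weights of its steps. -/
noncomputable def weight (α : ℕ) (L : LPath) : Aplus := qpow (L.expnt α)

/-- All vertices of the path lie on or below the line of slope `slope`
through the origin. -/
def IsBelow (slope : ℚ) (L : LPath) : Prop :=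
  ∀ v ∈ L.vertices, v.2 ≤ slope * v.1

/-- No vertex of the path other than the first and the last lies on the
line of slope `slope` through the origin. -/
def OffLineInterior (slope : ℚ) (L : LPath) : Prop :=
  ∀ v ∈ (L.vertices.drop 1).dropLast, v.2 ≠ slope * v.1

/-- Dyck path: all vertices on or below the line. -/
def IsDyck (slope : ℚ) (L : LPath) : Prop := IsBelow slope L

/-- Strict Dyck path: Dyck, and no interior vertex on the line. -/
def IsStrictDyck (slope : ℚ) (L : LPath) : Prop :=
  IsBelow slope L ∧ OffLineInterior slope L

end LPath

/-- A `t`-path from `x` to `y`: for each `a`, the path `L a` goes from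
`x a` to `y a`. -/
def FamFromTo {t : ℕ} (x y : Fin t → ℚ × ℚ) (L : Fin t → LPath) : Prop :=
  ∀ a, (L a).start = x a ∧ (L a).endpt = y a

/-- A `t`-path is crossing if two distinct member paths share a vertex. -/
def Crossing {t : ℕ} (L : Fin t → LPath) : Prop :=
  ∃ a b, a ≠ b ∧ ∃ v, v ∈ (L a).vertices ∧ v ∈ (L b).vertices

/-- The weight of a `t`-path: the product of the weights of its members. -/
noncomputable def famWeight (α : ℕ) {t : ℕ} (L : Fin t → LPath) : Aplus :=
  ∏ a, (L a).weight α

/-- `Dyck(x,y)`: the sum of the weights of all Dyck `t`-paths from `x` to `y`. -/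
noncomputable def DyckPoly (α : ℕ) (slope : ℚ) {t : ℕ} (x y : Fin t → ℚ × ℚ) : Aplus :=
  ∑ᶠ L ∈ {L : Fin t → LPath | FamFromTo x y L ∧ ∀ a, (L a).IsDyck slope}, famWeight α L

/-- `Dyck⁺(x,y)`: the sum over the non-crossing Dyck `t`-paths only. -/
noncomputable def DyckPolyNC (α : ℕ) (slope : ℚ) {t : ℕ} (x y : Fin t → ℚ × ℚ) : Aplus :=
  ∑ᶠ L ∈ {L : Fin t → LPath |
    FamFromTo x y L ∧ (∀ a, (L a).IsDyck slope) ∧ ¬ Crossing L}, famWeight α L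

/-- `Dyck_strict(x,y)`: the sum over the strict Dyck `t`-paths. -/
noncomputable def DyckPolyStrict (α : ℕ) (slope : ℚ) {t : ℕ} (x y : Fin t → ℚ × ℚ) : Aplus :=
  ∑ᶠ L ∈ {L : Fin t → LPath | FamFromTo x y L ∧ ∀ a, (L a).IsStrictDyck slope}, famWeight α L

/-- `Dyck⁺_strict(x,y)`: the sum over the non-crossing strict Dyck `t`-paths. -/
noncomputable def DyckPolyStrictNC (α : ℕ) (slope : ℚ) {t : ℕ} (x y : Fin t → ℚ × ℚ) : Aplus :=
  ∑ᶠ L ∈ {L : Fin t → LPath |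
    FamFromTo x y L ∧ (∀ a, (L a).IsStrictDyck slope) ∧ ¬ Crossing L}, famWeight α L

/-- The starting points `ux_a = ℓ(x_a)`, `x_a = (t-h)/2 - (a-1)`, of the Speh
configuration with parameters `(h,t)`; here `a : Fin t` is `0`-based. -/
def spehUX (slope : ℚ) (h t : ℕ) (a : Fin t) : ℚ × ℚ :=
  linePt slope (((t : ℚ) - (h : ℚ)) / 2 - (a.val : ℚ))

/-- The end points `uy_a = ℓ(y_a + 1)`, `y_a = (t+h)/2 - a`, of the Speh
configuration with parameters `(h,t)`; here `a : Fin t` is `0`-based. -/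
def spehUY (slope : ℚ) (h t : ℕ) (a : Fin t) : ℚ × ℚ :=
  linePt slope (((t : ℚ) + (h : ℚ)) / 2 - (a.val : ℚ))

/-- The defining property of the permutation `w₀`: it matches invariants,
`ρ(x_{w a}) = ρ(y_a)` for all `a`, and it reverses the order within each
invariant class: `w b < w a` whenever `a < b` and `ρ(y_a) = ρ(y_b)`. -/
def IsW0 {t : ℕ} (x y : Fin t → ℚ × ℚ) (w : Equiv.Perm (Fin t)) : Prop :=
  (∀ a, invPt (x (w a)) = invPt (y a)) ∧
  ∀ a b : Fin t, a < b → invPt (y a) = invPt (y b) → w b < w a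

theorem Function.Injective.card_fiber_comp_eq_iff {ι α β : Type*} {ψ : α → β}
    (hψ : ψ.Injective) (f g : ι → α) :
    (∀ ρ, Nat.card {i // ψ (f i) = ρ} = Nat.card {i // ψ (g i) = ρ}) ↔
      ∀ c, Nat.card {i // f i = c} = Nat.card {i // g i = c} := by
  refine ⟨fun H c => by simpa only [hψ.eq_iff] using H (ψ c), fun H ρ => ?_⟩
  by_cases hρ : ρ ∈ Set.range ψ
  · obtain ⟨c, rfl⟩ := hρ
    simpa only [hψ.eq_iff] using H c
  · have (k : ι → α) : IsEmpty {i // ψ (k i) = ρ} := ⟨fun i => hρ ⟨_, i.2⟩⟩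
    simp only [Nat.card_of_isEmpty]

theorem exists_injective_zmod_addMonoidHom {A : Type*} [AddGroup A] {θ : A} {m : ℕ}
    (hθ : addOrderOf θ = m) :
    ∃ ψ : ZMod m →+ A, Function.Injective ψ ∧ ∀ k : ℤ, ψ k = k • θ := by
  subst hθ
  let f : {f : ℤ →+ A // f (addOrderOf θ) = 0} := ⟨zmultiplesHom A θ, by simp⟩
  refine ⟨ZMod.lift _ f, (ZMod.lift_injective _).2 fun k hk => ?_, ZMod.lift_coe _ f⟩
  exact (ZMod.intCast_zmod_eq_zero_iff_dvd k _).2 (addOrderOf_dvd_iff_zsmul_eq_zero.2 hk)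

theorem Nat.count_modEq_of_lt {m v : ℕ} (hv : v < m) (t : ℕ) :
    t.count (· ≡ v [MOD m]) = t / m + if v < t % m then 1 else 0 := by
  induction t with
  | zero => simp
  | succ t ih =>
    have hm : 0 < m := by omega
    have hmod : t ≡ v [MOD m] ↔ t % m = v := by rw [Nat.ModEq, Nat.mod_eq_of_lt hv]
    have hrem := Nat.mod_lt t hm
    have hdiv := Nat.mod_add_div t m
    rw [Nat.count_succ, ih]
    simp only [hmod]
    rcases (show t % m + 1 < m ∨ t % m + 1 = m by omega) with hno_wrap | hwrap
    · obtain ⟨hq, hr⟩ : (t + 1) / m = t / m ∧ (t + 1) % m = t % m + 1 :=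
        (Nat.div_mod_unique hm).2 ⟨by omega, hno_wrap⟩
      rw [hq, hr]
      split_ifs <;> omega
    · obtain ⟨hq, hr⟩ : (t + 1) / m = t / m + 1 ∧ (t + 1) % m = 0 :=
        (Nat.div_mod_unique hm).2 ⟨by rw [mul_add]; omega, hm⟩
      rw [hq, hr]
      split_ifs <;> omega

open scoped Count in
theorem ZMod.card_fin_natCast_eq {m : ℕ} [NeZero m] (t : ℕ) (c : ZMod m) :
    Nat.card {a : Fin t // ((a : ℕ) : ZMod m) = c} = t / m + if c.val < t % m then 1 else 0 := by
  have key (k : ℕ) : (k : ZMod m) = c ↔ k ≡ c.val [MOD m] := by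
    rw [← ZMod.natCast_eq_natCast_iff, ZMod.natCast_zmod_val]
  rw [← Nat.count_modEq_of_lt (ZMod.val_lt c), Nat.count_eq_card_fintype,
    ← Nat.card_eq_fintype_card]
  exact Nat.card_congr ⟨fun a => ⟨a.1, a.1.2, (key a).1 a.2⟩,
    fun k => ⟨⟨k.1, k.2.1⟩, (key k).2 k.2.2⟩, fun _ => rfl, fun _ => rfl⟩

theorem ZMod.eq_zero_of_forall_val_add_lt_iff {m r : ℕ} [NeZero m] (hr : 0 < r) (hrm : r < m)
    {x : ZMod m} (hx : ∀ c : ZMod m, (c + x).val < r ↔ c.val < r) : x = 0 := by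
  have hxr : x.val < r := by simpa [hr] using hx 0
  have hc : ((r - x.val : ℕ) : ZMod m) + x = r := by
    rw [Nat.cast_sub hxr.le, ZMod.natCast_zmod_val, sub_add_cancel]
  have := hx ((r - x.val : ℕ) : ZMod m)
  rw [hc, ZMod.val_natCast_of_lt hrm, ZMod.val_natCast_of_lt (by omega)] at this
  rw [← ZMod.val_eq_zero]
  omega

theorem ZMod.forall_card_fin_natCast_eq_add_iff (m : ℕ) [NeZero m] (t h : ℕ) :
    (∀ c : ZMod m, Nat.card {a : Fin t // ((a : ℕ) : ZMod m) = c} =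
        Nat.card {a : Fin t // ((a : ℕ) : ZMod m) = c + h}) ↔ m ∣ t ∨ m ∣ h := by
  simp only [ZMod.card_fin_natCast_eq, Nat.add_left_cancel_iff]
  constructor
  · intro H
    rw [Nat.dvd_iff_mod_eq_zero, or_iff_not_imp_left, ← ZMod.natCast_eq_zero_iff]
    intro ht
    refine ZMod.eq_zero_of_forall_val_add_lt_iff (Nat.pos_of_ne_zero ht)
      (Nat.mod_lt _ (NeZero.pos m)) fun c => ?_
    have := H c
    split_ifs at this <;> omega
  · rintro (ht | hh) c
    · simp [Nat.mod_eq_zero_of_dvd ht]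
    · simp [(ZMod.natCast_eq_zero_iff h m).2 hh]

theorem addOrderOf_ratMod_div {n : ℕ} (hn : 0 < n) (s : ℕ) :
    addOrderOf (ratMod (s / n)) = n / n.gcd s := by
  have : Fact ((0 : ℚ) < 1) := ⟨one_pos⟩
  have h := AddCircle.gcd_mul_addOrderOf_div_eq (1 : ℚ) s hn
  rw [mul_one, Nat.gcd_comm] at h
  exact (Nat.div_eq_of_eq_mul_right (Nat.gcd_pos_of_pos_left s hn) h.symm).symm

theorem ratMod_mul_intCast (q : ℚ) (k : ℤ) : ratMod (q * k) = k • ratMod q := by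
  rw [ratMod, ratMod, ← map_zsmul, zsmul_eq_mul, mul_comm]

theorem invPt_spehUX (slope : ℚ) (h t : ℕ) (a : Fin t) :
    invPt (spehUX slope h t a) =
      ratMod (slope * ((t - h) / 2)) - ((a : ℕ) : ℤ) • ratMod slope := by
  rw [← ratMod_mul_intCast, ratMod, ratMod, ← map_sub]
  simp only [invPt, spehUX, linePt, ratMod]
  congr 1
  push_cast
  ring

theorem invPt_spehUY (slope : ℚ) (h t : ℕ) (a : Fin t) :
    invPt (spehUY slope h t a) =
      ratMod (slope * ((t - h) / 2)) - ((a : ℕ) - h : ℤ) • ratMod slope := by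
  rw [← ratMod_mul_intCast, ratMod, ratMod, ← map_sub]
  simp only [invPt, spehUY, linePt, ratMod]
  congr 1
  push_cast
  ring

theorem statement0_general (h t : ℕ) (ht : 1 ≤ t) (hth : t ≤ h) (s : ℕ) :
    let n : ℕ := h * t
    let slope : ℚ := (s : ℚ) / (n : ℚ)
    let ux : Fin t → ℚ × ℚ := spehUX slope h t
    let uy : Fin t → ℚ × ℚ := spehUY slope h t
    let m : ℕ := n / Nat.gcd n s
    ((∀ ρ : QmodZ,
        Nat.card {a : Fin t // invPt (ux a) = ρ} = Nat.card {a : Fin t // invPt (uy a) = ρ})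
      ↔ (m ∣ t ∨ m ∣ h)) := by
  intro n slope ux uy m
  have hn : 0 < n := Nat.mul_pos (by omega) ht
  have hm : addOrderOf (ratMod slope) = m := addOrderOf_ratMod_div hn s
  have : NeZero m := ⟨(Nat.div_pos (Nat.gcd_le_left s hn) (Nat.gcd_pos_of_pos_left s hn)).ne'⟩
  obtain ⟨ψ, hψ, hψθ⟩ := exists_injective_zmod_addMonoidHom hm
  set b := ratMod (slope * ((t - h) / 2))
  have hux (a : Fin t) : invPt (ux a) = b - ψ (a : ℕ) := by
    rw [invPt_spehUX, ← hψθ, Int.cast_natCast]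
  have huy (a : Fin t) : invPt (uy a) = b - ψ ((a : ℕ) - h) := by
    rw [invPt_spehUY, ← hψθ]; push_cast; rfl
  simp only [hux, huy]
  refine ((sub_right_injective.comp hψ).card_fiber_comp_eq_iff _ _).trans ?_
  simp only [sub_eq_iff_eq_add]
  exact ZMod.forall_card_fin_natCast_eq_add_iff m t h

/-- Lemma 7 (Lemma `combinatoriallemma`): for the Speh configuration with
parameters `(h,t)`, `h ≥ t ≥ 1`, `n = h·t`, `0 ≤ s ≤ n`, `d = gcd(n,s)`,
`m = n/d`, the invariants of the points `ux_a` and `uy_a` are equidistributed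
if and only if `m ∣ t` or `m ∣ h`. -/
theorem statement0 (h t : ℕ) (ht : 1 ≤ t) (hth : t ≤ h) (s : ℕ) (hs : s ≤ h * t) :
    let n : ℕ := h * t
    let slope : ℚ := (s : ℚ) / (n : ℚ)
    let ux : Fin t → ℚ × ℚ := spehUX slope h t
    let uy : Fin t → ℚ × ℚ := spehUY slope h t
    let m : ℕ := n / Nat.gcd n s
    ((∀ ρ : QmodZ,
        Nat.card {a : Fin t // invPt (ux a) = ρ} = Nat.card {a : Fin t // invPt (uy a) = ρ})
      ↔ (m ∣ t ∨ m ∣ h)) :=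
  statement0_general h t ht hth s
end

section
/- Consider the Speh configuration with parameters (h,t), h ≥ t ≥ 1, n := h·t, and an integer 0 < s < n; fix a positive integer α. Then there is at most one permutation w of {1,…,t} with Dyck⁺_strict(ux^w, uy) ≠ 0 in A⁺; moreover, if such a permutation w exists, then for every class ρ ∈ ℚ/ℤ the number of indices a with ρ(ux_a) = ρ equals the number of indices a with ρ(uy_a) = ρ, and w equals the permutation w_0. -/
open scoped BigOperators

/-!
Let `L` be a non-crossing strict Dyck `t`-path from `ux^w` to `uy`. Each `L a` starts and ends on
the line, so its endpoints have the same invariant, whence `ρ(ux_{w a}) = ρ(uy_a)`. If `a < b` lie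
in one invariant class but `w a < w b`, then `L b` starts strictly left of `L a` and ends strictly
left of it, while the two paths overlap in `x`. On the overlap the height difference of `L b` over
`L a` is an integer (the start heights agree mod `ℤ`) that changes by at most one per step; it is
negative where `L a` starts on the line and positive where `L b` ends on it, so it vanishes
somewhere and the two paths share a vertex. Hence `w` reverses the order on each class, which
determines it uniquely.
-/

lemma ratMod_eq_iff {x y : ℚ} : ratMod x = ratMod y ↔ ∃ k : ℤ, x - y = k := by
  show (x : QmodZ) = y ↔ _
  rw [QuotientAddGroup.eq_iff_sub_mem, AddSubgroup.mem_zmultiples_iff]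
  simp only [zsmul_eq_mul, mul_one, eq_comm]

lemma Int.exists_eq_zero_of_le_add_one (f : ℕ → ℤ) {m : ℕ} (h0 : f 0 ≤ 0) (hm : 0 ≤ f m)
    (hstep : ∀ i < m, f (i + 1) ≤ f i + 1) : ∃ i ≤ m, f i = 0 := by
  induction m with
  | zero => exact ⟨0, le_rfl, by omega⟩
  | succ m ih =>
    by_cases hfm : 0 ≤ f m
    · obtain ⟨i, him, hfi⟩ := ih hfm fun i hi => hstep i (by omega)
      exact ⟨i, by omega, hfi⟩
    · exact ⟨m + 1, le_rfl, by have := hstep m (by omega); omega⟩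

namespace LPath

/-- The `i`-th vertex of the path (the endpoint once `i` exceeds the number of steps). -/
def pt (L : LPath) (i : ℕ) : ℚ × ℚ :=
  (L.steps.take i).foldl (fun v b => v + stepVec b) L.start

lemma foldl_stepVec_fst (l : List Bool) (v : ℚ × ℚ) :
    (l.foldl (fun v b => v + stepVec b) v).1 = v.1 + l.length := by
  induction l generalizing v with
  | nil => simp
  | cons b l ih =>
    rw [List.foldl_cons, ih]
    simp only [Prod.fst_add, stepVec, List.length_cons]
    push_cast
    ring

lemma foldl_stepVec_snd (l : List Bool) (v : ℚ × ℚ) :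
    (l.foldl (fun v b => v + stepVec b) v).2 = v.2 + l.count true := by
  induction l generalizing v with
  | nil => simp
  | cons b l ih =>
    rw [List.foldl_cons, ih]
    cases b <;> simp [stepVec]
    ring

lemma pt_zero (L : LPath) : L.pt 0 = L.start := rfl

lemma pt_length (L : LPath) : L.pt L.steps.length = L.endpt := by
  rw [pt, List.take_length, endpt]

lemma pt_fst (L : LPath) (i : ℕ) : (L.pt i).1 = L.start.1 + min i L.steps.length := by
  rw [pt, foldl_stepVec_fst, List.length_take]

lemma pt_snd (L : LPath) (i : ℕ) : (L.pt i).2 = L.start.2 + (L.steps.take i).count true :=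
  foldl_stepVec_snd _ _

lemma endpt_fst (L : LPath) : L.endpt.1 = L.start.1 + L.steps.length :=
  foldl_stepVec_fst _ _

lemma invPt_endpt (L : LPath) : invPt L.endpt = invPt L.start :=
  ratMod_eq_iff.2 ⟨L.steps.count true, by rw [endpt, foldl_stepVec_snd]; push_cast; ring⟩

lemma count_take_le_succ (l : List Bool) (i : ℕ) :
    (l.take i).count true ≤ (l.take (i + 1)).count true :=
  ((List.take_prefix_take_left (by omega)).sublist).count_le _

lemma count_take_succ_le (l : List Bool) (i : ℕ) :
    (l.take (i + 1)).count true ≤ (l.take i).count true + 1 := by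
  rw [List.take_add_one, List.count_append]
  cases l[i]? <;> simp [List.count_singleton]; split <;> omega

lemma pt_mem_vertices (L : LPath) {i : ℕ} (hi : i ≤ L.steps.length) : L.pt i ∈ L.vertices := by
  have hlt : i < L.vertices.length := by simp [vertices]; omega
  simpa [vertices, pt] using List.getElem_mem hlt

lemma pt_mem_interior (L : LPath) {i : ℕ} (h0 : 0 < i) (hi : i < L.steps.length) :
    L.pt i ∈ (L.vertices.drop 1).dropLast := by
  have hlt : i - 1 < ((L.vertices.drop 1).dropLast).length := by simp [vertices]; omega
  have hget : ((L.vertices.drop 1).dropLast)[i - 1] = L.pt i := by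
    simp only [List.getElem_dropLast, List.getElem_drop, vertices, List.getElem_scanl, pt]
    congr 2
    omega
  exact hget ▸ List.getElem_mem hlt

lemma IsStrictDyck.pt_snd_lt {slope : ℚ} {L : LPath} (hL : L.IsStrictDyck slope) {i : ℕ}
    (h0 : 0 < i) (hi : i < L.steps.length) : (L.pt i).2 < slope * (L.pt i).1 :=
  lt_of_le_of_ne (hL.1 _ (L.pt_mem_vertices hi.le)) (hL.2 _ (L.pt_mem_interior h0 hi))

theorem exists_mem_vertices_of_interlaced {slope : ℚ} {A B : LPath}
    (hA : A.IsStrictDyck slope) (hB : B.IsStrictDyck slope)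
    (hAstart : A.start.2 = slope * A.start.1) (hBend : B.endpt.2 = slope * B.endpt.1)
    (hinv : invPt A.start = invPt B.start) {e m : ℕ} (he : 0 < e) (hm : 0 < m)
    (hx : B.start.1 + e = A.start.1) (hBlen : B.steps.length = m + e)
    (hAlen : m < A.steps.length) : ∃ v ∈ A.vertices, v ∈ B.vertices := by
  obtain ⟨k, hk⟩ := ratMod_eq_iff.1 hinv.symm
  set D : ℕ → ℤ := fun i =>
    k + (B.steps.take (i + e)).count true - (A.steps.take i).count true with hD
  have hDsnd (i : ℕ) : (D i : ℚ) = (B.pt (i + e)).2 - (A.pt i).2 := by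
    simp only [hD, pt_snd]; push_cast; linarith
  have hfst {i : ℕ} (hi : i ≤ m) : (B.pt (i + e)).1 = (A.pt i).1 := by
    rw [pt_fst, pt_fst, min_eq_left (by omega), min_eq_left (by omega), ← hx]
    push_cast; ring
  have hD0 : D 0 ≤ 0 := by
    have hlt := hB.pt_snd_lt (i := 0 + e) (by omega) (by omega)
    rw [hfst hm.le, pt_zero] at hlt
    have : (D 0 : ℚ) < 0 := by rw [hDsnd, pt_zero]; linarith
    exact_mod_cast this.le
  have hDm : 0 ≤ D m := by
    have hlt := hA.pt_snd_lt hm hAlen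
    have hend : (B.pt (m + e)).2 = slope * (B.pt (m + e)).1 := by rwa [← hBlen, pt_length]
    have : (0 : ℚ) < D m := by rw [hDsnd, hend, hfst le_rfl]; linarith
    exact_mod_cast this.le
  have hstep : ∀ i < m, D (i + 1) ≤ D i + 1 := fun i _ => by
    have hcB := count_take_succ_le B.steps (i + e)
    have hcA := count_take_le_succ A.steps i
    simp only [hD, show i + 1 + e = i + e + 1 by omega]
    omega
  obtain ⟨i, him, hDi⟩ := Int.exists_eq_zero_of_le_add_one D hD0 hDm hstep
  have hsnd : (B.pt (i + e)).2 = (A.pt i).2 := by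
    have := hDsnd i; rw [hDi] at this; push_cast at this; linarith
  refine ⟨A.pt i, A.pt_mem_vertices (by omega), ?_⟩
  rw [← Prod.ext (hfst him) hsnd]
  exact B.pt_mem_vertices (by omega)

end LPath

lemma Finset.eqOn_of_strictAntiOn_of_mapsTo {α β : Type*} [LinearOrder α] [LinearOrder β]
    {F : Finset α} {G : Finset β} {f g : α → β} (hcard : G.card = F.card)
    (hf : Set.MapsTo f F G) (hg : Set.MapsTo g F G)
    (hfa : StrictAntiOn f F) (hga : StrictAntiOn g F) : Set.EqOn f g F := by
  set eF := F.orderEmbOfFin rfl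
  have hmem (i : Fin F.card) : eF i ∈ F := F.orderEmbOfFin_mem rfl i
  have hrev {u : α → β} (hu : Set.MapsTo u F G) (hua : StrictAntiOn u F) :
      (fun i => u (eF i.rev)) = G.orderEmbOfFin hcard :=
    Finset.orderEmbOfFin_unique _ (fun i => hu (hmem _))
      fun i j hij => hua (hmem _) (hmem _) (eF.strictMono (Fin.rev_lt_rev.2 hij))
  intro c hc
  obtain ⟨i, rfl⟩ : c ∈ Set.range eF := by rwa [Finset.range_orderEmbOfFin]
  simpa using congrFun ((hrev hf hfa).trans (hrev hg hga).symm) i.rev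

lemma IsW0.eq {t : ℕ} {x y : Fin t → ℚ × ℚ} {w w' : Equiv.Perm (Fin t)}
    (hw : IsW0 x y w) (hw' : IsW0 x y w') : w = w' := by
  classical
  ext a : 1
  set F := Finset.univ.filter fun c => invPt (y c) = invPt (y a)
  set G := Finset.univ.filter fun c => invPt (x c) = invPt (y a)
  have hmaps {u : Equiv.Perm (Fin t)} (hu : IsW0 x y u) : Set.MapsTo u F G := fun c hc => by
    simp_all [F, G, hu.1 c]
  have hanti {u : Equiv.Perm (Fin t)} (hu : IsW0 x y u) : StrictAntiOn u F :=
    fun p hp q hq hpq => hu.2 p q hpq (by simp_all [F])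
  have hcard : G.card = F.card := by
    refine Finset.card_bij (fun c _ => w.symm c) (fun c hc => ?_) (by simp) fun c hc => ?_
    · simp only [F, G, Finset.mem_filter, Finset.mem_univ, true_and] at hc ⊢
      rwa [← hw.1, Equiv.apply_symm_apply]
    · exact ⟨w c, hmaps hw hc, by simp⟩
  exact Finset.eqOn_of_strictAntiOn_of_mapsTo hcard (hmaps hw) (hmaps hw')
    (hanti hw) (hanti hw') (by simp [F])

lemma IsW0.card_invPt_eq {t : ℕ} {x y : Fin t → ℚ × ℚ} {w : Equiv.Perm (Fin t)}
    (hw : IsW0 x y w) (ρ : QmodZ) :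
    Nat.card {a // invPt (x a) = ρ} = Nat.card {a // invPt (y a) = ρ} :=
  (Nat.card_congr (w.subtypeEquiv fun a => by rw [hw.1 a])).symm

lemma exists_of_dyckPolyStrictNC_ne_zero {α : ℕ} {slope : ℚ} {t : ℕ} {x y : Fin t → ℚ × ℚ}
    (h : DyckPolyStrictNC α slope x y ≠ 0) :
    ∃ L : Fin t → LPath, FamFromTo x y L ∧ (∀ a, (L a).IsStrictDyck slope) ∧ ¬ Crossing L := by
  contrapose! h
  exact finsum_mem_of_eqOn_zero fun L hL => (hL.2.2 (h L hL.1 hL.2.1)).elim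

theorem isW0_speh_of_strictDyck_of_not_crossing {h t : ℕ} (hth : t ≤ h) {slope : ℚ}
    {w : Equiv.Perm (Fin t)} {L : Fin t → LPath}
    (hL : FamFromTo (fun a => spehUX slope h t (w a)) (spehUY slope h t) L)
    (hdyck : ∀ a, (L a).IsStrictDyck slope) (hnc : ¬ Crossing L) :
    IsW0 (spehUX slope h t) (spehUY slope h t) w := by
  have hlen (a : Fin t) : (L a).steps.length + a = h + w a := by
    have := (L a).endpt_fst
    rw [(hL a).1, (hL a).2] at this
    simp only [spehUX, spehUY, linePt] at this
    exact_mod_cast (by linarith : ((L a).steps.length + a : ℚ) = h + w a)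
  have hmatch (a : Fin t) : invPt (spehUX slope h t (w a)) = invPt (spehUY slope h t a) := by
    have := (L a).invPt_endpt
    rwa [(hL a).1, (hL a).2, eq_comm] at this
  refine ⟨hmatch, fun a b hab hinv => ?_⟩
  by_contra! hwab
  replace hwab : (w a : ℕ) < w b := Fin.lt_def.1 (lt_of_le_of_ne hwab (w.injective.ne hab.ne))
  have hb : (b : ℕ) < h := b.isLt.trans_le hth
  have hab' : (a : ℕ) < b := hab
  have hla := hlen a
  have hlb := hlen b
  obtain ⟨v, hva, hvb⟩ := LPath.exists_mem_vertices_of_interlaced (hdyck a) (hdyck b)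
    (by rw [(hL a).1]; rfl) (by rw [(hL b).2]; rfl)
    (by rw [(hL a).1, (hL b).1, hmatch, hmatch, hinv]) (e := w b - w a) (m := h + w a - b)
    (by omega) (by omega)
    (by rw [(hL a).1, (hL b).1]; simp [spehUX, linePt, Nat.cast_sub hwab.le])
    (by omega) (by omega)
  exact hnc ⟨a, b, hab.ne, v, hva, hvb⟩

theorem statement4_general (h t : ℕ) (hth : t ≤ h) (s : ℕ) (α : ℕ) :
    let n : ℕ := h * t
    let slope : ℚ := (s : ℚ) / (n : ℚ)
    let ux : Fin t → ℚ × ℚ := spehUX slope h t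
    let uy : Fin t → ℚ × ℚ := spehUY slope h t
    (∀ w w' : Equiv.Perm (Fin t),
        DyckPolyStrictNC α slope (fun a => ux (w a)) uy ≠ 0 →
        DyckPolyStrictNC α slope (fun a => ux (w' a)) uy ≠ 0 → w = w') ∧
    (∀ w : Equiv.Perm (Fin t),
        DyckPolyStrictNC α slope (fun a => ux (w a)) uy ≠ 0 →
        (∀ ρ : QmodZ, Nat.card {a : Fin t // invPt (ux a) = ρ}
            = Nat.card {a : Fin t // invPt (uy a) = ρ}) ∧
        IsW0 ux uy w) := by
  intro n slope ux uy
  have hw0 (w : Equiv.Perm (Fin t)) (hw : DyckPolyStrictNC α slope (fun a => ux (w a)) uy ≠ 0) :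
      IsW0 ux uy w := by
    obtain ⟨L, hL, hdyck, hnc⟩ := exists_of_dyckPolyStrictNC_ne_zero hw
    exact isW0_speh_of_strictDyck_of_not_crossing hth hL hdyck hnc
  exact ⟨fun w w' hw hw' => (hw0 w hw).eq (hw0 w' hw'),
    fun w hw => ⟨(hw0 w hw).card_invPt_eq, hw0 w hw⟩⟩

/-- For the Speh configuration with parameters `(h,t)`, `h ≥ t ≥ 1`,
`n = h·t`, `0 < s < n`: there is at most one permutation `w` with
`Dyck⁺_strict(ux^w, uy) ≠ 0`; moreover if such a `w` exists then the
invariants of the `ux_a` and the `uy_a` are equidistributed and `w` is the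
permutation `w₀`. -/
theorem statement4 (h t : ℕ) (ht : 1 ≤ t) (hth : t ≤ h) (s : ℕ)
    (hs0 : 0 < s) (hsn : s < h * t) (α : ℕ) (hα : 1 ≤ α) :
    let n : ℕ := h * t
    let slope : ℚ := (s : ℚ) / (n : ℚ)
    let ux : Fin t → ℚ × ℚ := spehUX slope h t
    let uy : Fin t → ℚ × ℚ := spehUY slope h t
    (∀ w w' : Equiv.Perm (Fin t),
        DyckPolyStrictNC α slope (fun a => ux (w a)) uy ≠ 0 →
        DyckPolyStrictNC α slope (fun a => ux (w' a)) uy ≠ 0 → w = w') ∧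
    (∀ w : Equiv.Perm (Fin t),
        DyckPolyStrictNC α slope (fun a => ux (w a)) uy ≠ 0 →
        (∀ ρ : QmodZ, Nat.card {a : Fin t // invPt (ux a) = ρ}
            = Nat.card {a : Fin t // invPt (uy a) = ρ}) ∧
        IsW0 ux uy w) :=
  statement4_general h t hth s α
end

section
/- Fix integers n ≥ 1 and 0 < s < n and let ℓ be the line of slope s/n through the origin in ℚ². Let L be a path from P1 to Q1 and L′ a path from P2 to Q2, where P1, Q1, P2, Q2 all lie on ℓ, every point of L and of L′ lies on or below ℓ, the first coordinates satisfy P1 < P2 ≤ Q1 < Q2, the difference of the first coordinates of P2 and P1 is an integer, and the invariants satisfy ρ(P1) = ρ(P2) in ℚ/ℤ. Then L and L′ have a common vertex: some point of ℚ² occurs in the defining sequence of points of L and also in the defining sequence of points of L′. -/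
open scoped BigOperators

/-! With `K = P2.x - P1.x`, the vertex of `L'` after `j` steps lies on the same vertical as the
vertex of `L` after `K + j` steps, at an integral height difference (this is what
`ρ(P1) = ρ(P2)` buys). That difference is `≤ 0` at `j = 0`, because `P2` lies on `ℓ` and `L`
below it, and `≥ 0` when `L` reaches `Q1`, because `Q1` lies on `ℓ` and `L'` below it. Along the
way it grows by at most one per step, so it takes the value `0`: a common vertex. -/

lemma Int.exists_eq_of_forall_le_add_one (f : ℕ → ℤ) (c : ℤ) :
    ∀ N : ℕ, f 0 ≤ c → c ≤ f N → (∀ j < N, f (j + 1) ≤ f j + 1) → ∃ j ≤ N, f j = c := by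
  intro N
  induction N with
  | zero => exact fun h0 hN _ => ⟨0, le_rfl, le_antisymm h0 hN⟩
  | succ M ih =>
    intro h0 hN hstep
    rcases le_or_gt c (f M) with hM | hM
    · obtain ⟨j, hj, hfj⟩ := ih h0 hM fun j hj => hstep j (by omega)
      exact ⟨j, by omega, hfj⟩
    · exact ⟨M + 1, le_rfl, by have := hstep M (by omega); omega⟩

lemma invPt_eq_iff {v w : ℚ × ℚ} : invPt v = invPt w ↔ ∃ d : ℤ, w.2 = v.2 + d := by
  simp only [invPt, ratMod, QuotientAddGroup.mk'_apply, QuotientAddGroup.eq,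
    AddSubgroup.mem_zmultiples_iff, zsmul_eq_mul, mul_one]
  constructor
  · rintro ⟨d, hd⟩; exact ⟨d, by linarith⟩
  · rintro ⟨d, hd⟩; exact ⟨d, by linarith⟩

namespace LPath

lemma foldl_add_stepVec (v : ℚ × ℚ) (l : List Bool) :
    l.foldl (fun v b => v + stepVec b) v = v + ((l.length : ℚ), (l.count true : ℚ)) := by
  induction l generalizing v with
  | nil => simp
  | cons b l ih =>
    rw [List.foldl_cons, ih]
    cases b <;> ext <;> simp [stepVec] <;> ring

def vertex (L : LPath) (i : ℕ) : ℚ × ℚ :=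
  (L.steps.take i).foldl (fun v b => v + stepVec b) L.start

def height (L : LPath) (i : ℕ) : ℕ :=
  (L.steps.take i).count true

lemma vertex_eq (L : LPath) {i : ℕ} (hi : i ≤ L.steps.length) :
    L.vertex i = L.start + ((i : ℚ), (L.height i : ℚ)) := by
  rw [vertex, foldl_add_stepVec, List.length_take_of_le hi, height]

lemma vertex_length (L : LPath) : L.vertex L.steps.length = L.endpt := by
  rw [vertex, List.take_length, endpt]

lemma vertex_mem_vertices (L : LPath) {i : ℕ} (hi : i ≤ L.steps.length) :
    L.vertex i ∈ L.vertices := by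
  have hlt : i < (L.steps.scanl (fun v b => v + stepVec b) L.start).length := by
    rw [List.length_scanl]; omega
  rw [vertex, ← List.getElem_scanl hlt]
  exact List.getElem_mem hlt

lemma height_le_height_succ (L : LPath) (i : ℕ) : L.height i ≤ L.height (i + 1) :=
  ((List.take_prefix_take_left (Nat.le_succ i)).sublist).count_le true

lemma height_succ_le (L : LPath) (i : ℕ) : L.height (i + 1) ≤ L.height i + 1 := by
  rw [height, height, List.take_add_one, List.count_append, add_le_add_iff_left]
  exact List.count_le_length.trans (by cases L.steps[i]? <;> simp)

lemma endpt_eq (L : LPath) :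
    L.endpt = L.start + ((L.steps.length : ℚ), (L.height L.steps.length : ℚ)) := by
  rw [← vertex_length, vertex_eq L le_rfl]

lemma IsBelow.height_le {sl : ℚ} {L : LPath} (h : L.IsBelow sl) {i : ℕ}
    (hi : i ≤ L.steps.length) : L.start.2 + L.height i ≤ sl * (L.start.1 + i) := by
  simpa [vertex_eq L hi] using h _ (L.vertex_mem_vertices hi)

theorem exists_mem_vertices_of_shift {sl : ℚ} {L L' : LPath} {K : ℕ} {d : ℤ}
    (hshift : L'.start = L.start + ((K : ℚ), (d : ℚ)))
    (hP2 : L'.start.2 = sl * L'.start.1) (hQ1 : L.endpt.2 = sl * L.endpt.1)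
    (hbelow : L.IsBelow sl) (hbelow' : L'.IsBelow sl)
    (hK : K ≤ L.steps.length) (hlen : L.steps.length ≤ K + L'.steps.length) :
    ∃ v, v ∈ L.vertices ∧ v ∈ L'.vertices := by
  obtain ⟨N, hKN⟩ := Nat.exists_eq_add_of_le hK
  have hx : L'.start.1 = L.start.1 + K := by simp [hshift]
  have hy : L'.start.2 = L.start.2 + d := by simp [hshift]
  have hend := congrArg Prod.snd L.endpt_eq
  have hendx := congrArg Prod.fst L.endpt_eq
  simp only [Prod.snd_add, Prod.fst_add] at hend hendx
  let G : ℕ → ℤ := fun j => L.height (K + j) - L'.height j - d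
  have hG0 : G 0 ≤ 0 := by
    have hL := hbelow.height_le hK
    have hline : L.start.2 + d = sl * (L.start.1 + K) := by rw [← hx, ← hy, hP2]
    have : (L.height K : ℚ) ≤ d := by linarith
    simpa [G, height] using (by exact_mod_cast this : (L.height K : ℤ) ≤ d)
  have hGN : 0 ≤ G N := by
    have hL' := hbelow'.height_le (i := N) (by omega)
    have hline : sl * (L'.start.1 + N) = L.start.2 + L.height (K + N) := by
      rw [hx, ← hKN, ← hend, hQ1, hendx, hKN]; push_cast; ring
    have : (d : ℚ) + L'.height N ≤ L.height (K + N) := by linarith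
    have : (d : ℤ) + L'.height N ≤ L.height (K + N) := by exact_mod_cast this
    simp only [G]; omega
  have hstep : ∀ j < N, G (j + 1) ≤ G j + 1 := fun j _ => by
    have := L.height_succ_le (K + j)
    have := L'.height_le_height_succ j
    simp only [G, ← add_assoc]
    omega
  obtain ⟨j, hj, hGj⟩ := Int.exists_eq_of_forall_le_add_one G 0 N hG0 hGN hstep
  refine ⟨L.vertex (K + j), L.vertex_mem_vertices (by omega), ?_⟩
  have hcommon : L.vertex (K + j) = L'.vertex j := by
    have : (L.height (K + j) : ℚ) = L'.height j + d := by
      exact_mod_cast (by simp only [G] at hGj; omega : (L.height (K + j) : ℤ) = L'.height j + d)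
    rw [L.vertex_eq (by omega), L'.vertex_eq (by omega), hshift]
    ext <;> simp [this] <;> ring
  exact hcommon ▸ L'.vertex_mem_vertices (by omega)

end LPath

theorem statement9_general (n s : ℕ)
    (L L' : LPath)
    (hQ1 : L.endpt = linePt ((s : ℚ) / (n : ℚ)) L.endpt.1)
    (hP2 : L'.start = linePt ((s : ℚ) / (n : ℚ)) L'.start.1)
    (hbelow : L.IsBelow ((s : ℚ) / (n : ℚ)))
    (hbelow' : L'.IsBelow ((s : ℚ) / (n : ℚ)))
    (hord1 : L.start.1 < L'.start.1)
    (hord2 : L'.start.1 ≤ L.endpt.1)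
    (hord3 : L.endpt.1 < L'.endpt.1)
    (hint : ∃ k : ℤ, L'.start.1 - L.start.1 = (k : ℚ))
    (hinv : invPt L.start = invPt L'.start) :
    ∃ v : ℚ × ℚ, v ∈ L.vertices ∧ v ∈ L'.vertices := by
  obtain ⟨k, hk⟩ := hint
  obtain ⟨d, hd⟩ := invPt_eq_iff.mp hinv
  lift k to ℕ using by exact_mod_cast (by linarith : (0 : ℚ) ≤ k)
  have hlen := congrArg Prod.fst L.endpt_eq
  have hlen' := congrArg Prod.fst L'.endpt_eq
  simp only [Prod.fst_add] at hlen hlen'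
  refine LPath.exists_mem_vertices_of_shift (K := k) (d := d) ?_
    (by simpa [linePt] using congrArg Prod.snd hP2) (by simpa [linePt] using congrArg Prod.snd hQ1)
    hbelow hbelow' ?_ ?_
  · ext <;> simp <;> push_cast at hk <;> linarith
  · exact_mod_cast (by push_cast at hk; linarith : (k : ℚ) ≤ L.steps.length)
  · exact_mod_cast (by push_cast at hk; linarith : (L.steps.length : ℚ) ≤ k + L'.steps.length)

/-- Two Dyck paths (w.r.t. the line `ℓ` of slope `s/n`, `0 < s < n`) whose
endpoints lie on `ℓ` and interleave as `P1 < P2 ≤ Q1 < Q2`, such that the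
horizontal distance from `P1` to `P2` is integral and `ρ(P1) = ρ(P2)` in
`ℚ/ℤ`, must share a vertex. -/
theorem statement9 (n s : ℕ) (hn : 1 ≤ n) (hs0 : 0 < s) (hsn : s < n)
    (L L' : LPath)
    (hP1 : L.start = linePt ((s : ℚ) / (n : ℚ)) L.start.1)
    (hQ1 : L.endpt = linePt ((s : ℚ) / (n : ℚ)) L.endpt.1)
    (hP2 : L'.start = linePt ((s : ℚ) / (n : ℚ)) L'.start.1)
    (hQ2 : L'.endpt = linePt ((s : ℚ) / (n : ℚ)) L'.endpt.1)
    (hbelow : L.IsBelow ((s : ℚ) / (n : ℚ)))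
    (hbelow' : L'.IsBelow ((s : ℚ) / (n : ℚ)))
    (hord1 : L.start.1 < L'.start.1)
    (hord2 : L'.start.1 ≤ L.endpt.1)
    (hord3 : L.endpt.1 < L'.endpt.1)
    (hint : ∃ k : ℤ, L'.start.1 - L.start.1 = (k : ℚ))
    (hinv : invPt L.start = invPt L'.start) :
    ∃ v : ℚ × ℚ, v ∈ L.vertices ∧ v ∈ L'.vertices :=
  statement9_general n s L L' hQ1 hP2 hbelow hbelow' hord1 hord2 hord3 hint hinv
end

section
/- Let h ≤ t be positive integers, set n := h·t, and let w be any permutation of {1,…,h}. Define n_a := t − a + w(a) and u_a := (t−h)/2 − (w(a) − 1) for a = 1,…,h. Then Σ_{a=1}^h [ (1−n)/2 + Σ_{b=1}^{a−1} n_b − u_a ] · n_a ≤ 0. -/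
/-!
Write `N a = t - a + w a`. Then `Σ N = h t`, and the double sum `Σ_a (Σ_{b<a} N b) N a` equals
`((Σ N)² - Σ N²) / 2`. The only `w`-dependent remainder, `Σ w(a) N a - Σ N² / 2`, is independent
of `w` because `N a² - 2 w(a) N a = (t - a)² - w(a)²` and `w` permutes the squares. Altogether
`C(w) = h t (h - t)` for every `w`, which is `≤ 0` as `h ≤ t`.
-/

open Finset

theorem two_mul_sum_sum_lt_mul {ι R : Type*} [Fintype ι] [LinearOrder ι] [CommRing R]
    (g : ι → R) :
    2 * ∑ a, (∑ b, if b < a then g b else 0) * g a = (∑ a, g a) ^ 2 - ∑ a, g a ^ 2 := by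
  have split_pair : ∀ a b, g a * g b
      = (if b < a then g b * g a else 0) + (if a < b then g a * g b else 0)
        + if a = b then g a * g b else 0 := by
    intro a b
    rcases lt_trichotomy a b with hab | rfl | hab
    · simp [hab, hab.not_gt, hab.ne]
    · simp
    · simp [hab, hab.not_gt, hab.ne', mul_comm]
  have swap : ∑ a, ∑ b, (if a < b then g a * g b else 0)
      = ∑ a, ∑ b, if b < a then g b * g a else 0 := sum_comm
  calc 2 * ∑ a, (∑ b, if b < a then g b else 0) * g a
      = 2 * ∑ a, ∑ b, if b < a then g b * g a else 0 := by
        simp only [sum_mul, ite_mul, zero_mul]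
    _ = (∑ a, g a) ^ 2 - ∑ a, g a ^ 2 := by
        rw [sq, sum_mul_sum, sum_congr rfl fun a _ => sum_congr rfl fun b _ => split_pair a b]
        simp only [sum_add_distrib, swap]
        simp only [sum_ite_eq, mem_univ, if_true, sq]
        ring

section PermShift

variable {R : Type*} [CommRing R]

theorem two_mul_sum_fin_val (h : ℕ) : 2 * ∑ a : Fin h, (a.val : R) = h * (h - 1) := by
  rw [Fin.sum_univ_eq_sum_range (fun i => (i : R)) h]
  induction h with
  | zero => simp
  | succ k ih => rw [sum_range_succ]; push_cast; linear_combination ih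

theorem sum_sub_add_perm {h : ℕ} (t : R) (w : Equiv.Perm (Fin h)) :
    ∑ a, (t - a.val + (w a).val) = h * t := by
  rw [sum_add_distrib, sum_sub_distrib, Equiv.sum_comp w fun a => (a.val : R)]
  simp

theorem sum_sub_add_perm_sq_sub {h : ℕ} (t : R) (w : Equiv.Perm (Fin h)) :
    ∑ a, (t - a.val + (w a).val) ^ 2 - 2 * ∑ a, ((w a).val : R) * (t - a.val + (w a).val)
      = h * t ^ 2 - 2 * t * ∑ a : Fin h, (a.val : R) :=
  calc _ = ∑ a : Fin h, ((t - a.val) ^ 2 - ((w a).val : R) ^ 2) := by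
        rw [mul_sum, ← sum_sub_distrib]
        exact sum_congr rfl fun a _ => by ring
    _ = ∑ a : Fin h, (t ^ 2 - 2 * t * a.val) := by
        rw [sum_sub_distrib, Equiv.sum_comp w fun a => (a.val : R) ^ 2, ← sum_sub_distrib]
        exact sum_congr rfl fun a _ => by ring
    _ = h * t ^ 2 - 2 * t * ∑ a : Fin h, (a.val : R) := by simp [sum_sub_distrib, mul_sum]

end PermShift

theorem statement12_general (h t : ℕ) (hht : h ≤ t) (w : Equiv.Perm (Fin h)) :
    ∑ a : Fin h,
      ((1 - (h : ℚ) * (t : ℚ)) / 2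
        + (∑ b : Fin h, if b.val < a.val then ((t : ℚ) - (b.val : ℚ) + ((w b).val : ℚ)) else 0)
        - (((t : ℚ) - (h : ℚ)) / 2 - ((w a).val : ℚ)))
      * ((t : ℚ) - (a.val : ℚ) + ((w a).val : ℚ))
    ≤ 0 := by
  set N : Fin h → ℚ := fun a => t - a.val + (w a).val
  have hprefix := two_mul_sum_sum_lt_mul N
  simp only [Fin.lt_def] at hprefix
  have hsum : ∑ a, N a = h * t := sum_sub_add_perm (t : ℚ) w
  have hsq := sum_sub_add_perm_sq_sub (t : ℚ) w
  have hC : ∑ a : Fin h, ((1 - (h : ℚ) * t) / 2 + (∑ b : Fin h, if b.val < a.val then N b else 0)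
      - ((t - h) / 2 - (w a).val)) * N a = h * t * (h - t) := by
    simp only [add_mul, sub_mul, sum_add_distrib, sum_sub_distrib, ← mul_sum, hsum] at hprefix ⊢
    linear_combination hprefix / 2 - hsq / 2 + t * two_mul_sum_fin_val (R := ℚ) h / 2
  rw [hC]
  exact mul_nonpos_of_nonneg_of_nonpos (by positivity) (sub_nonpos.2 (by exact_mod_cast hht))

/-- Non-positivity of the quantity `C(w)` of the paper: for positive integers
`h ≤ t`, `n = h·t`, any permutation `w` of `{1,…,h}`, and
`n_a = t - a + w(a)`, `u_a = (t-h)/2 - (w(a)-1)`, one has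
`Σ_{a=1}^h [ (1-n)/2 + Σ_{b=1}^{a-1} n_b - u_a ]·n_a ≤ 0`.
(Here `a : Fin h` is `0`-based, so `n_a = t - a.val + w(a).val` and
`u_a = (t-h)/2 - (w a).val`.) -/
theorem statement12 (h t : ℕ) (hh : 1 ≤ h) (hht : h ≤ t) (w : Equiv.Perm (Fin h)) :
    ∑ a : Fin h,
      ((1 - (h : ℚ) * (t : ℚ)) / 2
        + (∑ b : Fin h, if b.val < a.val then ((t : ℚ) - (b.val : ℚ) + ((w b).val : ℚ)) else 0)
        - (((t : ℚ) - (h : ℚ)) / 2 - ((w a).val : ℚ)))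
      * ((t : ℚ) - (a.val : ℚ) + ((w a).val : ℚ))
    ≤ 0 :=
  statement12_general h t hht w
end
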